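/- Let n and N be positive integers, let R > 0 and p > 1, and let Z_{ij} = R·U_{ij}, where the U_{ij} (1 ≤ i ≤ n, 1 ≤ j ≤ N) are i.i.d. random variables with probability density f(u) = (p + 1)u^p on [0, 1]. Let R̃₁ = max_{i,j} Z_{ij}. Then the variance of R̃₁ equals R²·nN(p + 1)/((nN(p + 1) + 1)²·(nN(p + 1) + 2)). -/

import Mathlib

/-!
Write `q = nN(p + 1)`. Each `U_{ij}` has distribution function `u ↦ u ^ (p + 1)` on `[0, 1]`, so by
independence the maximum `M` has distribution function `u ↦ u ^ q`, i.e. the same kind of law with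
shape `q`. Its moments are `E M ^ k = q / (q + k)`, whence `Var M = q / ((q + 1)² (q + 2))`, and
the factor `R` multiplies the variance by `R²`.
-/

open MeasureTheory ProbabilityTheory Real Set

/-- The distribution `Beta(c, 1)`. -/
noncomputable def powerLaw (c : ℝ) : Measure ℝ :=
  (volume.restrict (Icc 0 1)).withDensity fun v => ENNReal.ofReal (c * v ^ (c - 1))

lemma withDensity_ofReal_indicator_eq_powerLaw (c : ℝ) :
    volume.withDensity
      (fun u => ENNReal.ofReal ((Icc (0 : ℝ) 1).indicator (fun v => c * v ^ (c - 1)) u)) =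
      powerLaw c := by
  rw [powerLaw, ← withDensity_indicator measurableSet_Icc]
  congr 1
  ext u
  by_cases hu : u ∈ Icc (0 : ℝ) 1 <;> simp [hu]

variable {c : ℝ}

lemma powerLaw_ae_mem_Icc : ∀ᵐ x ∂powerLaw c, x ∈ Icc (0 : ℝ) 1 :=
  (withDensity_absolutelyContinuous _ _).ae_le (ae_restrict_mem measurableSet_Icc)

lemma lintegral_Icc_ofReal_mul_rpow_sub_one (hc : 0 < c) {m : ℝ} (hm : 0 ≤ m) :
    ∫⁻ v in Icc 0 m, ENNReal.ofReal (c * v ^ (c - 1)) = ENNReal.ofReal (m ^ c) := by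
  have hint : IntervalIntegrable (fun v => c * v ^ (c - 1)) volume 0 m :=
    (intervalIntegral.intervalIntegrable_rpow' (by linarith)).const_mul c
  rw [setLIntegral_congr Ioc_ae_eq_Icc.symm, ← ofReal_integral_eq_lintegral_ofReal
    ((intervalIntegrable_iff_integrableOn_Ioc_of_le hm).mp hint)
    ((ae_restrict_mem measurableSet_Ioc).mono fun v hv => by have := hv.1; positivity),
    ← intervalIntegral.integral_of_le hm, intervalIntegral.integral_const_mul,
    integral_rpow (Or.inl (by linarith)), sub_add_cancel, zero_rpow hc.ne']
  field_simp
  simp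

lemma powerLaw_Iic (hc : 0 < c) (t : ℝ) :
    powerLaw c (Iic t) = ENNReal.ofReal (min (max t 0) 1 ^ c) := by
  have hset : Iic t ∩ Icc 0 1 = Icc 0 (min t 1) := by
    ext; simp only [mem_inter_iff, mem_Iic, mem_Icc, le_min_iff]; tauto
  rw [powerLaw, withDensity_apply _ measurableSet_Iic, Measure.restrict_restrict measurableSet_Iic,
    hset]
  rcases le_or_gt 0 t with ht | ht
  · rw [lintegral_Icc_ofReal_mul_rpow_sub_one hc (le_min ht zero_le_one), max_eq_left ht]
  · rw [Icc_eq_empty (by simp [ht]), Measure.restrict_empty, lintegral_zero_measure,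
      max_eq_right ht.le, min_eq_left zero_le_one, zero_rpow hc.ne', ENNReal.ofReal_zero]

lemma isProbabilityMeasure_powerLaw (hc : 0 < c) : IsProbabilityMeasure (powerLaw c) := by
  refine ⟨?_⟩
  rw [powerLaw, withDensity_apply _ MeasurableSet.univ, Measure.restrict_univ,
    lintegral_Icc_ofReal_mul_rpow_sub_one hc zero_le_one, one_rpow, ENNReal.ofReal_one]

lemma integral_pow_powerLaw (hc : 0 < c) (k : ℕ) :
    ∫ x, x ^ k ∂powerLaw c = c / (c + k) := by
  rw [powerLaw, integral_withDensity_eq_integral_toReal_smul (by fun_prop)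
    (ae_of_all _ fun _ => ENNReal.ofReal_lt_top), integral_Icc_eq_integral_Ioc,
    ← intervalIntegral.integral_of_le zero_le_one]
  have hk : (0 : ℝ) ≤ k := k.cast_nonneg
  have hpow : ∀ v ∈ uIoc (0 : ℝ) 1,
      (ENNReal.ofReal (c * v ^ (c - 1))).toReal • v ^ k = c * v ^ (c - 1 + k) := by
    intro v hv
    have hv0 : 0 < v := (uIoc_of_le (zero_le_one (α := ℝ)) ▸ hv).1
    rw [ENNReal.toReal_ofReal (by positivity), smul_eq_mul, mul_assoc, rpow_add hv0,
      rpow_natCast]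
  rw [intervalIntegral.integral_congr_ae (ae_of_all _ hpow), intervalIntegral.integral_const_mul,
    integral_rpow (Or.inl (by linarith)), one_rpow, zero_rpow (by linarith)]
  ring_nf

lemma variance_id_powerLaw (hc : 0 < c) :
    variance id (powerLaw c) = c / ((c + 1) ^ 2 * (c + 2)) := by
  have := isProbabilityMeasure_powerLaw hc
  have hL2 : MemLp id 2 (powerLaw c) :=
    MemLp.of_bound aestronglyMeasurable_id 1 <| powerLaw_ae_mem_Icc.mono fun x hx => by
      simpa [abs_le] using ⟨by linarith [hx.1], hx.2⟩
  have h1 := integral_pow_powerLaw hc 1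
  have h2 := integral_pow_powerLaw hc 2
  simp only [pow_one, Nat.cast_one, Nat.cast_ofNat] at h1 h2
  rw [variance_eq_sub hL2]
  simp only [id_eq, Pi.pow_apply]
  rw [h1, h2]
  field_simp
  ring

section Maximum

variable {Ω ι : Type*} [MeasurableSpace Ω] {μ : Measure Ω} [Fintype ι] [Nonempty ι]
  {X : ι → Ω → ℝ}

lemma ProbabilityTheory.iIndepFun.measure_iSup_preimage_Iic (hX : iIndepFun X μ) (t : ℝ) :
    μ ((fun ω => ⨆ i, X i ω) ⁻¹' Iic t) = ∏ i, μ (X i ⁻¹' Iic t) := by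
  have hset : (fun ω => ⨆ i, X i ω) ⁻¹' Iic t = ⋂ i, X i ⁻¹' Iic t := by
    ext ω
    simp only [mem_iInter, mem_preimage, mem_Iic]
    exact ciSup_le_iff (finite_range _).bddAbove
  rw [hset, hX.meas_iInter fun i => ⟨Iic t, measurableSet_Iic, rfl⟩]

lemma map_iSup_eq_powerLaw [IsFiniteMeasure μ] (hc : 0 < c) (hmeas : ∀ i, Measurable (X i))
    (hlaw : ∀ i, μ.map (X i) = powerLaw c) (hX : iIndepFun X μ) :
    μ.map (fun ω => ⨆ i, X i ω) = powerLaw (Fintype.card ι * c) := by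
  have hmax : Measurable fun ω => ⨆ i, X i ω := Measurable.iSup hmeas
  refine Measure.ext_of_Iic _ _ fun t => ?_
  have hprob : ∀ i, μ (X i ⁻¹' Iic t) = ENNReal.ofReal (min (max t 0) 1 ^ c) := fun i => by
    rw [← Measure.map_apply (hmeas i) measurableSet_Iic, hlaw i, powerLaw_Iic hc]
  have hclamp : 0 ≤ min (max t 0) 1 := le_min (le_max_right t 0) zero_le_one
  rw [Measure.map_apply hmax measurableSet_Iic, powerLaw_Iic (by positivity),
    hX.measure_iSup_preimage_Iic t, Finset.prod_congr rfl fun i _ => hprob i, Finset.prod_const,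
    Finset.card_univ, ← ENNReal.ofReal_pow (by positivity), ← rpow_natCast, ← rpow_mul hclamp, mul_comm]

end Maximum

/-- If `U_{ij}` are i.i.d. with density `f(u) = (p+1)u^p` on `[0,1]` and `Z_{ij} = R·U_{ij}`,
then the variance of the maximum `R̃₁ = max Z_{ij}` equals
`R²·nN(p+1)/((nN(p+1)+1)²·(nN(p+1)+2))`. -/
theorem variance_max_power_density
    {Ω : Type*} [MeasureSpace Ω] [IsProbabilityMeasure (ℙ : Measure Ω)]
    (n N : ℕ) (hn : 0 < n) (hN : 0 < N) (R p : ℝ) (hR : 0 < R) (hp : 1 < p)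
    (U : Fin n × Fin N → Ω → ℝ)
    (hmeas : ∀ ij, Measurable (U ij))
    (hlaw : ∀ ij, Measure.map (U ij) ℙ =
      volume.withDensity
        (fun u => ENNReal.ofReal ((Set.Icc (0 : ℝ) 1).indicator (fun v => (p + 1) * v ^ p) u)))
    (hindep : iIndepFun U ℙ) :
    variance (fun ω => ⨆ ij, R * U ij ω) ℙ =
      R ^ 2 * ((n : ℝ) * N * (p + 1)) /
        (((n : ℝ) * N * (p + 1) + 1) ^ 2 * ((n : ℝ) * N * (p + 1) + 2)) := by
  have : Nonempty (Fin n × Fin N) := ⟨(⟨0, hn⟩, ⟨0, hN⟩)⟩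
  have hc : 0 < p + 1 := by linarith
  have hU : ∀ ij, Measure.map (U ij) ℙ = powerLaw (p + 1) := fun ij => by
    rw [hlaw, ← withDensity_ofReal_indicator_eq_powerLaw, add_sub_cancel_right]
  have hmax := map_iSup_eq_powerLaw hc hmeas hU hindep
  rw [Fintype.card_prod, Fintype.card_fin, Fintype.card_fin, Nat.cast_mul] at hmax
  calc variance (fun ω => ⨆ ij, R * U ij ω) ℙ
      = R ^ 2 * variance (fun ω => ⨆ ij, U ij ω) ℙ := by
        simp_rw [← mul_iSup_of_nonneg hR.le]
        exact variance_const_mul R _ ℙ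
    _ = R ^ 2 * variance id (powerLaw (n * N * (p + 1))) := by
        rw [← hmax, variance_map aemeasurable_id (Measurable.iSup hmeas).aemeasurable]
        rfl
    _ = _ := by rw [variance_id_powerLaw (by positivity)]; ring
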